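/- Let S, Z, X, Y, Z' be discrete random variables such that (S,Z) ↔ X ↔ (Y,Z') is a Markov chain and X ↔ Y ↔ Z' is a Markov chain. Then I(S; Z,Y) − I(S; Z,Z') ≤ I(S,Z; Y) − I(S,Z; Z'). -/

import Mathlib

open Finset

structure FinProb (Ω : Type) [Fintype Ω] where
  p : Ω → ℝ
  nonneg : ∀ ω, 0 ≤ p ω
  sum_one : ∑ ω, p ω = 1

namespace FinProb

variable {Ω : Type} [Fintype Ω] (μ : FinProb Ω)

/-- P(X = x) -/
noncomputable def prob {α : Type} [DecidableEq α] (X : Ω → α) (x : α) : ℝ :=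
  ∑ ω, if X ω = x then μ.p ω else 0

/-- Shannon entropy (base 2) of a random variable. -/
noncomputable def H {α : Type} [Fintype α] [DecidableEq α] (X : Ω → α) : ℝ :=
  -∑ x, μ.prob X x * Real.logb 2 (μ.prob X x)

/-- Mutual information I(X;Y). -/
noncomputable def I {α β : Type} [Fintype α] [DecidableEq α] [Fintype β] [DecidableEq β]
    (X : Ω → α) (Y : Ω → β) : ℝ :=
  μ.H X + μ.H Y - μ.H (fun ω => (X ω, Y ω))

/-- Conditional entropy H(X|Z). -/
noncomputable def condH {α γ : Type} [Fintype α] [DecidableEq α] [Fintype γ] [DecidableEq γ]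
    (X : Ω → α) (Z : Ω → γ) : ℝ :=
  μ.H (fun ω => (X ω, Z ω)) - μ.H Z

/-- Conditional mutual information I(X;Y|Z). -/
noncomputable def condI {α β γ : Type} [Fintype α] [DecidableEq α] [Fintype β] [DecidableEq β]
    [Fintype γ] [DecidableEq γ] (X : Ω → α) (Y : Ω → β) (Z : Ω → γ) : ℝ :=
  μ.condH X Z + μ.condH Y Z - μ.condH (fun ω => (X ω, Y ω)) Z

/-- X and Y are conditionally independent given Z. -/
def CondIndep {α β γ : Type} [DecidableEq α] [DecidableEq β] [DecidableEq γ]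
    (X : Ω → α) (Y : Ω → β) (Z : Ω → γ) : Prop :=
  ∀ x y z, μ.prob (fun ω => (X ω, Y ω, Z ω)) (x, y, z) * μ.prob Z z
    = μ.prob (fun ω => (X ω, Z ω)) (x, z) * μ.prob (fun ω => (Y ω, Z ω)) (y, z)

/-- X and Y are independent. -/
def Indep {α β : Type} [DecidableEq α] [DecidableEq β] (X : Ω → α) (Y : Ω → β) : Prop :=
  ∀ x y, μ.prob (fun ω => (X ω, Y ω)) (x, y) = μ.prob X x * μ.prob Y y

end FinProb

/-- Binary entropy function (base 2). -/
noncomputable def binEnt (x : ℝ) : ℝ := -x * Real.logb 2 x - (1 - x) * Real.logb 2 (1 - x)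

/-!
Expanding into entropies, `I(S; Z,Y) - I(S,Z; Y) = I(S; Z) - I(Z; Y)`, and likewise with `Z'` for
`Y`, so the claim is exactly `I(Z; Z') ≤ I(Z; Y)`. Summing the two Markov hypotheses over `X`
gives the chain `Z ↔ Y ↔ Z'`, and the data-processing inequality for that chain is Gibbs'
inequality between the law of `(Z, Z', Y)` and `p(z, z') p(z', y) / p(z')`.
-/

theorem Real.sum_mul_log_div_nonneg {ι : Type*} [Fintype ι] {p q : ι → ℝ}
    (hp : ∀ i, 0 ≤ p i) (hq : ∀ i, 0 ≤ q i) (hpq : ∀ i, 0 < p i → 0 < q i)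
    (hsum : ∑ i, q i ≤ ∑ i, p i) : 0 ≤ ∑ i, p i * Real.log (p i / q i) := by
  have termwise : ∀ i, p i - q i ≤ p i * Real.log (p i / q i) := by
    intro i
    rcases (hp i).eq_or_lt with h0 | hpos
    · simp [← h0, hq i]
    · have hqi := hpq i hpos
      calc p i - q i = p i * (1 - (p i / q i)⁻¹) := by field_simp
        _ ≤ p i * Real.log (p i / q i) :=
          mul_le_mul_of_nonneg_left (Real.one_sub_inv_le_log_of_pos (by positivity)) hpos.le
  calc 0 ≤ ∑ i, (p i - q i) := by rw [Finset.sum_sub_distrib]; linarith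
    _ ≤ _ := Finset.sum_le_sum fun i _ => termwise i

namespace FinProb

variable {Ω : Type} [Fintype Ω] (μ : FinProb Ω)
variable {α β γ τ : Type} [DecidableEq α] [DecidableEq β] [DecidableEq γ] [DecidableEq τ]

lemma prob_nonneg (T : Ω → α) (t : α) : 0 ≤ μ.prob T t :=
  Finset.sum_nonneg fun ω _ => by split_ifs; exacts [μ.nonneg ω, le_rfl]

lemma prob_congr_iff {T : Ω → α} {T' : Ω → β} {t : α} {t' : β}
    (h : ∀ ω, T ω = t ↔ T' ω = t') : μ.prob T t = μ.prob T' t' :=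
  Finset.sum_congr rfl fun ω _ => if_congr (h ω) rfl rfl

lemma sum_prob [Fintype α] (T : Ω → α) : ∑ t, μ.prob T t = 1 := by
  simp only [prob]
  rw [Finset.sum_comm, ← μ.sum_one]
  simp

lemma prob_comp [Fintype τ] (T : Ω → τ) (f : τ → α) (a : α) :
    μ.prob (fun ω => f (T ω)) a = ∑ t, if f t = a then μ.prob T t else 0 := by
  simp only [prob, Finset.ite_sum_zero]
  rw [Finset.sum_comm]
  refine Finset.sum_congr rfl fun ω _ => ?_
  rw [Fintype.sum_eq_single (T ω) fun t ht => by simp [Ne.symm ht]]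
  simp

lemma prob_comp_fst [Fintype α] (U : Ω → α) (W : Ω → β) (f : α → γ) (c : γ) (w : β) :
    μ.prob (fun ω => (f (U ω), W ω)) (c, w)
      = ∑ u, if f u = c then μ.prob (fun ω => (U ω, W ω)) (u, w) else 0 := by
  simp only [prob, Finset.ite_sum_zero]
  rw [Finset.sum_comm]
  refine Finset.sum_congr rfl fun ω _ => ?_
  rw [Fintype.sum_eq_single (U ω) fun u hu => by simp [Prod.ext_iff, Ne.symm hu]]
  simp [Prod.ext_iff, ite_and]

lemma sum_prob_pair_left [Fintype α] (U : Ω → α) (W : Ω → β) (w : β) :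
    ∑ u, μ.prob (fun ω => (U ω, W ω)) (u, w) = μ.prob W w := by
  simp only [prob]
  rw [Finset.sum_comm]
  simp [Prod.ext_iff, ite_and]

lemma sum_prob_pair_right [Fintype β] (U : Ω → α) (W : Ω → β) (u : α) :
    ∑ w, μ.prob (fun ω => (U ω, W ω)) (u, w) = μ.prob U u := by
  simp only [prob]
  rw [Finset.sum_comm]
  simp [Prod.ext_iff, ite_and]

lemma prob_le_prob_comp (T : Ω → τ) (f : τ → α) (t : τ) :
    μ.prob T t ≤ μ.prob (fun ω => f (T ω)) (f t) :=
  Finset.sum_le_sum fun ω _ => by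
    split_ifs with h₁ h₂
    · exact le_rfl
    · exact absurd (congrArg f h₁) h₂
    · exact μ.nonneg ω
    · exact le_rfl

lemma prob_comp_pos {T : Ω → τ} {t : τ} (h : 0 < μ.prob T t) (f : τ → α) :
    0 < μ.prob (fun ω => f (T ω)) (f t) :=
  h.trans_le (μ.prob_le_prob_comp T f t)

lemma prob_eq_zero_of_comp (T : Ω → τ) (f : τ → α) (t : τ)
    (h : μ.prob (fun ω => f (T ω)) (f t) = 0) : μ.prob T t = 0 :=
  le_antisymm (h ▸ μ.prob_le_prob_comp T f t) (μ.prob_nonneg T t)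

lemma prob_comp_of_injective {f : τ → α} (hf : Function.Injective f) (T : Ω → τ) (t : τ) :
    μ.prob (fun ω => f (T ω)) (f t) = μ.prob T t :=
  μ.prob_congr_iff fun _ => hf.eq_iff

lemma H_comp_eq_neg_sum [Fintype τ] [Fintype α] (T : Ω → τ) (f : τ → α) :
    μ.H (fun ω => f (T ω))
      = -∑ t, μ.prob T t * Real.logb 2 (μ.prob (fun ω => f (T ω)) (f t)) := by
  simp only [H, μ.prob_comp T f, Finset.sum_mul, ite_mul, zero_mul]
  rw [Finset.sum_comm]
  simp

lemma H_comp_of_injective [Fintype τ] [Fintype α] {f : τ → α} (hf : Function.Injective f)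
    (T : Ω → τ) : μ.H (fun ω => f (T ω)) = μ.H T := by
  simp only [H_comp_eq_neg_sum, μ.prob_comp_of_injective hf]
  rfl


variable {μ}

lemma CondIndep.symm {U : Ω → α} {V : Ω → β} {W : Ω → γ} (h : μ.CondIndep U V W) :
    μ.CondIndep V U W := by
  intro v u w
  rw [mul_comm (μ.prob (fun ω => (V ω, W ω)) (v, w)), ← h u v w]
  congr 1
  exact μ.prob_congr_iff fun ω => by simp only [Prod.ext_iff]; tauto

lemma CondIndep.comp_left [Fintype α] {U : Ω → α} {V : Ω → β} {W : Ω → γ}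
    (h : μ.CondIndep U V W) (f : α → τ) : μ.CondIndep (fun ω => f (U ω)) V W := by
  intro c v w
  rw [μ.prob_comp_fst U (fun ω => (V ω, W ω)) f c (v, w), μ.prob_comp_fst U W f c w,
    Finset.sum_mul, Finset.sum_mul]
  refine Finset.sum_congr rfl fun u _ => ?_
  split_ifs
  · exact h u v w
  · simp

lemma CondIndep.comp_right [Fintype β] {U : Ω → α} {V : Ω → β} {W : Ω → γ}
    (h : μ.CondIndep U V W) (f : β → τ) : μ.CondIndep U (fun ω => f (V ω)) W :=
  (h.symm.comp_left f).symm

lemma CondIndep.chain {ξ : Type} [DecidableEq ξ] [Fintype ξ] [Fintype β] [Fintype γ]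
    {A : Ω → α} {X : Ω → ξ} {B : Ω → β} {C : Ω → γ}
    (h₁ : μ.CondIndep A (fun ω => (B ω, C ω)) X) (h₂ : μ.CondIndep X C B) :
    μ.CondIndep A C B := by
  intro a c b
  have hAB : μ.CondIndep A B X := h₁.comp_right Prod.fst
  -- The chain holds on every slice `X = x`; summing over `x` gives it for the marginal.
  have slice : ∀ x, μ.prob (fun ω => (A ω, (B ω, C ω), X ω)) (a, (b, c), x) * μ.prob B b
      = μ.prob (fun ω => (A ω, B ω, X ω)) (a, b, x) * μ.prob (fun ω => (C ω, B ω)) (c, b) := by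
    intro x
    by_cases hx0 : μ.prob X x = 0
    · rw [μ.prob_eq_zero_of_comp _ (fun t => t.2.2) (a, (b, c), x) hx0,
        μ.prob_eq_zero_of_comp _ (fun t => t.2.2) (a, b, x) hx0, zero_mul, zero_mul]
    refine mul_left_cancel₀ hx0 ?_
    have r₁ : μ.prob (fun ω => ((B ω, C ω), X ω)) ((b, c), x)
        = μ.prob (fun ω => (X ω, C ω, B ω)) (x, c, b) :=
      μ.prob_congr_iff fun ω => by simp only [Prod.ext_iff]; tauto
    have r₂ : μ.prob (fun ω => (B ω, X ω)) (b, x) = μ.prob (fun ω => (X ω, B ω)) (x, b) :=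
      μ.prob_congr_iff fun ω => by simp only [Prod.ext_iff]; tauto
    linear_combination μ.prob B b * h₁ a (b, c) x
      - μ.prob (fun ω => (C ω, B ω)) (c, b) * hAB a b x
      + μ.prob (fun ω => (A ω, X ω)) (a, x)
        * (h₂ x c b + μ.prob B b * r₁ - μ.prob (fun ω => (C ω, B ω)) (c, b) * r₂)
  have marg_ACB : μ.prob (fun ω => (A ω, C ω, B ω)) (a, c, b)
      = ∑ x, μ.prob (fun ω => (A ω, (B ω, C ω), X ω)) (a, (b, c), x) := by
    rw [← μ.sum_prob_pair_right (fun ω => (A ω, C ω, B ω)) X]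
    exact Finset.sum_congr rfl fun x _ =>
      μ.prob_congr_iff fun ω => by simp only [Prod.ext_iff]; tauto
  have marg_AB : μ.prob (fun ω => (A ω, B ω)) (a, b)
      = ∑ x, μ.prob (fun ω => (A ω, B ω, X ω)) (a, b, x) := by
    rw [← μ.sum_prob_pair_right (fun ω => (A ω, B ω)) X]
    exact Finset.sum_congr rfl fun x _ =>
      μ.prob_congr_iff fun ω => by simp only [Prod.ext_iff]; tauto
  rw [marg_ACB, marg_AB, Finset.sum_mul, Finset.sum_mul]
  exact Finset.sum_congr rfl fun x _ => slice x

variable (μ)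

lemma I_sub_I_eq_sum [Fintype α] [Fintype β] [Fintype γ] (A : Ω → α) (B : Ω → β) (C : Ω → γ) :
    μ.I A B - μ.I A C = ∑ t : α × γ × β, μ.prob (fun ω => (A ω, C ω, B ω)) t *
      (Real.logb 2 (μ.prob (fun ω => (A ω, B ω)) (t.1, t.2.2)) + Real.logb 2 (μ.prob C t.2.1)
        - Real.logb 2 (μ.prob B t.2.2)
        - Real.logb 2 (μ.prob (fun ω => (A ω, C ω)) (t.1, t.2.1))) := by
  set T := fun ω => (A ω, C ω, B ω)
  have hB : μ.H B = -∑ t, μ.prob T t * Real.logb 2 (μ.prob B t.2.2) :=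
    μ.H_comp_eq_neg_sum T fun t => t.2.2
  have hC : μ.H C = -∑ t, μ.prob T t * Real.logb 2 (μ.prob C t.2.1) :=
    μ.H_comp_eq_neg_sum T fun t => t.2.1
  have hAB : μ.H (fun ω => (A ω, B ω))
      = -∑ t, μ.prob T t * Real.logb 2 (μ.prob (fun ω => (A ω, B ω)) (t.1, t.2.2)) :=
    μ.H_comp_eq_neg_sum T fun t => (t.1, t.2.2)
  have hAC : μ.H (fun ω => (A ω, C ω))
      = -∑ t, μ.prob T t * Real.logb 2 (μ.prob (fun ω => (A ω, C ω)) (t.1, t.2.1)) :=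
    μ.H_comp_eq_neg_sum T fun t => (t.1, t.2.1)
  simp only [I, hB, hC, hAB, hAC, mul_add, mul_sub, Finset.sum_add_distrib, Finset.sum_sub_distrib]
  ring

-- The law of `(A, C, B)` under which `A` and `B` are independent given `C`; it vanishes where
-- `p(c) = 0`.
noncomputable def condProdLaw (A : Ω → α) (C : Ω → γ) (B : Ω → β) (t : α × γ × β) : ℝ :=
  μ.prob (fun ω => (A ω, C ω)) (t.1, t.2.1) * μ.prob (fun ω => (C ω, B ω)) (t.2.1, t.2.2)
    / μ.prob C t.2.1

lemma condProdLaw_nonneg (A : Ω → α) (C : Ω → γ) (B : Ω → β) (t : α × γ × β) :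
    0 ≤ μ.condProdLaw A C B t :=
  div_nonneg (mul_nonneg (μ.prob_nonneg _ _) (μ.prob_nonneg _ _)) (μ.prob_nonneg _ _)

lemma condProdLaw_pos {A : Ω → α} {C : Ω → γ} {B : Ω → β} {t : α × γ × β}
    (h : 0 < μ.prob (fun ω => (A ω, C ω, B ω)) t) : 0 < μ.condProdLaw A C B t :=
  div_pos (mul_pos (μ.prob_comp_pos h fun t => (t.1, t.2.1))
    (μ.prob_comp_pos h fun t => (t.2.1, t.2.2))) (μ.prob_comp_pos h fun t => t.2.1)

lemma sum_condProdLaw [Fintype α] [Fintype β] [Fintype γ]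
    (A : Ω → α) (C : Ω → γ) (B : Ω → β) : ∑ t, μ.condProdLaw A C B t = 1 := by
  rw [← μ.sum_prob C]
  simp only [condProdLaw, Fintype.sum_prod_type]
  rw [Finset.sum_comm]
  refine Finset.sum_congr rfl fun c _ => ?_
  simp_rw [mul_div_assoc, ← Finset.mul_sum, ← Finset.sum_div, μ.sum_prob_pair_right,
    ← Finset.sum_mul, μ.sum_prob_pair_left, ← mul_div_assoc, mul_self_div_self]

variable {μ}

lemma CondIndep.mul_logb_eq_mul_logb_div_condProdLaw {A : Ω → α} {B : Ω → β} {C : Ω → γ}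
    (h : μ.CondIndep A C B) (t : α × γ × β) :
    μ.prob (fun ω => (A ω, C ω, B ω)) t *
      (Real.logb 2 (μ.prob (fun ω => (A ω, B ω)) (t.1, t.2.2)) + Real.logb 2 (μ.prob C t.2.1)
        - Real.logb 2 (μ.prob B t.2.2) - Real.logb 2 (μ.prob (fun ω => (A ω, C ω)) (t.1, t.2.1)))
      = μ.prob (fun ω => (A ω, C ω, B ω)) t *
        Real.logb 2 (μ.prob (fun ω => (A ω, C ω, B ω)) t / μ.condProdLaw A C B t) := by
  obtain ⟨a, c, b⟩ := t
  rcases (μ.prob_nonneg (fun ω => (A ω, C ω, B ω)) (a, c, b)).eq_or_lt with h0 | hP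
  · simp [← h0]
  have hAC : 0 < μ.prob (fun ω => (A ω, C ω)) (a, c) := μ.prob_comp_pos hP fun t => (t.1, t.2.1)
  have hCB : 0 < μ.prob (fun ω => (C ω, B ω)) (c, b) := μ.prob_comp_pos hP fun t => (t.2.1, t.2.2)
  have hC : 0 < μ.prob C c := μ.prob_comp_pos hP fun t => t.2.1
  have hB : 0 < μ.prob B b := μ.prob_comp_pos hP fun t => t.2.2
  have hAB : 0 < μ.prob (fun ω => (A ω, B ω)) (a, b) := μ.prob_comp_pos hP fun t => (t.1, t.2.2)
  have log_h := congrArg (Real.logb 2) (h a c b)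
  rw [Real.logb_mul hP.ne' hB.ne', Real.logb_mul hAB.ne' hCB.ne'] at log_h
  rw [condProdLaw, Real.logb_div hP.ne' (by positivity), Real.logb_div (by positivity) hC.ne',
    Real.logb_mul hAC.ne' hCB.ne']
  congr 1
  linarith

theorem I_le_I_of_condIndep [Fintype α] [Fintype β] [Fintype γ]
    {A : Ω → α} {B : Ω → β} {C : Ω → γ} (h : μ.CondIndep A C B) : μ.I A C ≤ μ.I A B := by
  rw [← sub_nonneg, I_sub_I_eq_sum,
    Finset.sum_congr rfl fun t _ => h.mul_logb_eq_mul_logb_div_condProdLaw t]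
  have gibbs := Real.sum_mul_log_div_nonneg (μ.prob_nonneg _) (μ.condProdLaw_nonneg A C B)
    (fun _ => μ.condProdLaw_pos) (by rw [μ.sum_condProdLaw, μ.sum_prob])
  simp only [Real.logb, ← mul_div_assoc, ← Finset.sum_div]
  exact div_nonneg gibbs (Real.log_nonneg one_le_two)

variable (μ)

lemma I_prod_right_sub_I_prod_left [Fintype α] [Fintype β] [Fintype γ]
    (A : Ω → α) (B : Ω → β) (C : Ω → γ) :
    μ.I A (fun ω => (B ω, C ω)) - μ.I (fun ω => (A ω, B ω)) C = μ.I A B - μ.I B C := by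
  have assoc : μ.H (fun ω => (A ω, B ω, C ω)) = μ.H (fun ω => ((A ω, B ω), C ω)) :=
    μ.H_comp_of_injective (Equiv.prodAssoc α β γ).injective fun ω => ((A ω, B ω), C ω)
  simp only [I, assoc]
  ring

end FinProb

theorem stmt10 {Ω S Z X Y Z' : Type} [Fintype Ω]
    [Fintype S] [DecidableEq S] [Fintype Z] [DecidableEq Z]
    [Fintype X] [DecidableEq X] [Fintype Y] [DecidableEq Y]
    [Fintype Z'] [DecidableEq Z']
    (μ : FinProb Ω) (s : Ω → S) (z : Ω → Z) (x : Ω → X) (y : Ω → Y) (z' : Ω → Z')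
    (h1 : μ.CondIndep (fun ω => (s ω, z ω)) (fun ω => (y ω, z' ω)) x)
    (h2 : μ.CondIndep x z' y) :
    μ.I s (fun ω => (z ω, y ω)) - μ.I s (fun ω => (z ω, z' ω))
      ≤ μ.I (fun ω => (s ω, z ω)) y - μ.I (fun ω => (s ω, z ω)) z' := by
  have markov : μ.CondIndep z z' y := (h1.comp_left Prod.snd).chain h2
  have dpi := FinProb.I_le_I_of_condIndep markov
  linarith [μ.I_prod_right_sub_I_prod_left s z y, μ.I_prod_right_sub_I_prod_left s z z']
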